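/- Let A : [0,∞) → ℝ be continuous and define m_{1,A}(s,T) = exp(∫_s^T A) and σ²_A(s,T) = ∫_s^T exp(2∫_{s'}^T A) ds'. Then for 0 ≤ s < T: ∫_s^T m_{1,A}(s')² / σ⁴_A(s')·ds' = m_{1,A}(s)² σ²_A(s,T) / (σ²_A(T) σ²_A(s)), where m_{1,A}(s) = m_{1,A}(0,s) and σ²_A(s) = σ²_A(0,s), provided σ²_A(s) > 0. -/

import Mathlib

/-!
With `I(x) = ∫₀ˣ A`, the integrand `exp(2∫ᵤᵇ A)` factors as `e^{2I(b)} · e^{-2I(u)}`, so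
`σ²_A(a,b) = e^{2I(b)} (J(b) - J(a))` where `J(x) = ∫₀ˣ e^{-2I}`. Since `m_{1,A}(x)² = e^{2I(x)}`,
the integrand `m_{1,A}(x)²/σ⁴_A(x)` is `J'(x)/J(x)²`, the derivative of `-1/J`; the integral is
`1/J(s) - 1/J(T) = (J(T) - J(s))/(J(T) J(s))`, which is the right-hand side after the factors
`e^{2I}` cancel.
-/

open MeasureTheory Set intervalIntegral

/-- Two-parameter `m₁,A(s,T) = exp(∫ₛᵀ A)`. -/
noncomputable def m1A2 (A : ℝ → ℝ) (s T : ℝ) : ℝ := Real.exp (∫ v in s..T, A v)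

/-- Two-parameter `σ²_A(s,T) = ∫ₛᵀ exp(2∫_{s'}ᵀ A) ds'`. -/
noncomputable def sig2A2 (A : ℝ → ℝ) (s T : ℝ) : ℝ :=
  ∫ u in s..T, Real.exp (2 * ∫ v in u..T, A v)

open Real

theorem integral_deriv_div_sq_eq_inv_sub_inv {F f : ℝ → ℝ} {a b : ℝ}
    (hF : ∀ x ∈ uIcc a b, HasDerivAt F (f x) x) (hf : ContinuousOn f (uIcc a b))
    (hF₀ : ∀ x ∈ uIcc a b, F x ≠ 0) :
    ∫ x in a..b, f x / F x ^ 2 = (F a)⁻¹ - (F b)⁻¹ := by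
  have hderiv : ∀ x ∈ uIcc a b, HasDerivAt (fun y => -(F y)⁻¹) (f x / F x ^ 2) x := by
    intro x hx
    have h := ((hF x hx).inv (hF₀ x hx)).neg
    rwa [neg_div, neg_neg] at h
  have hFcont : ContinuousOn F (uIcc a b) :=
    continuousOn_of_forall_continuousAt fun x hx => (hF x hx).continuousAt
  have hint : IntervalIntegrable (fun x => f x / F x ^ 2) volume a b :=
    (hf.div (hFcont.pow 2) fun x hx => pow_ne_zero 2 (hF₀ x hx)).intervalIntegrable
  rw [integral_eq_sub_of_hasDerivAt hderiv hint]
  ring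

theorem m1A2_sq (A : ℝ → ℝ) (a b : ℝ) : m1A2 A a b ^ 2 = exp (2 * ∫ v in a..b, A v) := by
  rw [m1A2, ← exp_nat_mul]
  norm_num

theorem sig2A2_eq_exp_mul_integral {A : ℝ → ℝ} (hA : ∀ a b, IntervalIntegrable A volume a b)
    (a b : ℝ) :
    sig2A2 A a b =
      exp (2 * ∫ v in 0..b, A v) * ∫ u in a..b, exp (-(2 * ∫ v in 0..u, A v)) := by
  rw [sig2A2, ← intervalIntegral.integral_const_mul]
  refine integral_congr fun u _ => ?_
  rw [← integral_interval_sub_left (hA 0 b) (hA 0 u), ← exp_add]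
  ring_nf

theorem sigma_quartic_integral_identity_general
    (A : ℝ → ℝ) (hA : Continuous A) (s T : ℝ) (hsT : s < T)
    (hσ : 0 < sig2A2 A 0 s) :
    (∫ s' in s..T, (m1A2 A 0 s') ^ 2 / (sig2A2 A 0 s') ^ 2)
      = (m1A2 A 0 s) ^ 2 * sig2A2 A s T / (sig2A2 A 0 T * sig2A2 A 0 s) := by
  set W : ℝ → ℝ := fun u => exp (-(2 * ∫ v in 0..u, A v))
  set J : ℝ → ℝ := fun x => ∫ u in 0..x, W u
  have hW : Continuous W := by
    have := continuous_primitive (μ := volume) hA.intervalIntegrable 0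
    fun_prop
  have hJ : ∀ x, HasDerivAt J (W x) x := fun x => (hW.integral_hasStrictDerivAt 0 x).hasDerivAt
  have hσJ : ∀ a b, sig2A2 A a b = exp (2 * ∫ v in 0..b, A v) * (J b - J a) := fun a b => by
    rw [sig2A2_eq_exp_mul_integral hA.intervalIntegrable,
      ← integral_interval_sub_left (hW.intervalIntegrable 0 b) (hW.intervalIntegrable 0 a)]
  have hJ₀ : J 0 = 0 := integral_same
  have hJs : 0 < J s := by
    rw [hσJ, hJ₀, sub_zero] at hσ
    exact pos_of_mul_pos_right hσ (exp_pos _).le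
  have hJpos : ∀ x ∈ uIcc s T, 0 < J x := fun x hx =>
    hJs.trans_le (monotone_of_hasDerivAt_nonneg hJ (fun u => (exp_pos _).le)
      (uIcc_of_le hsT.le ▸ hx).1)
  calc (∫ x in s..T, m1A2 A 0 x ^ 2 / sig2A2 A 0 x ^ 2)
      = ∫ x in s..T, W x / J x ^ 2 := integral_congr fun x _ => by
        simp only [m1A2_sq, hσJ, hJ₀, sub_zero, W, exp_neg]
        field_simp
    _ = (J s)⁻¹ - (J T)⁻¹ :=
        integral_deriv_div_sq_eq_inv_sub_inv (fun x _ => hJ x) hW.continuousOn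
          fun x hx => (hJpos x hx).ne'
    _ = m1A2 A 0 s ^ 2 * sig2A2 A s T / (sig2A2 A 0 T * sig2A2 A 0 s) := by
        have hJT := (hJpos T right_mem_uIcc).ne'
        have hJs' := hJs.ne'
        rw [m1A2_sq, hσJ, hσJ, hσJ, hJ₀, sub_zero]
        field_simp
        ring

theorem sigma_quartic_integral_identity
    (A : ℝ → ℝ) (hA : Continuous A) (s T : ℝ) (hs : 0 ≤ s) (hsT : s < T)
    (hσ : 0 < sig2A2 A 0 s) :
    (∫ s' in s..T, (m1A2 A 0 s') ^ 2 / (sig2A2 A 0 s') ^ 2)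
      = (m1A2 A 0 s) ^ 2 * sig2A2 A s T / (sig2A2 A 0 T * sig2A2 A 0 s) :=
  sigma_quartic_integral_identity_general A hA s T hsT hσ
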